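/- arXiv:1401.3161 — 5 statements merged into one kernel-verified Lean document; each statement's English description precedes it below -/
import Mathlib

section
/- The Gaussian q-binomial theorem: for elements q, b of a commutative ring and n ∈ ℕ, the product ∏_{i=0}^{n-1} (1 - q^i b) equals ∑_{i=0}^{n} (n choose i)_q · q^{i(i-1)/2} · (-1)^i · b^i, where (n choose i)_q is the Gaussian binomial coefficient. -/
/-!
Since `∏_{i<n+1} (1 - q^i b) = (1 - b) ∏_{i<n} (1 - q^i (q b))`, induction on `n` reduces the
formula to a comparison of coefficients of `b^(k+1)`, and that comparison is exactly the
`q`-Pascal recursion defining `gaussBinom`, once `q^(k choose 2)` is pushed through it using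
`(k+1 choose 2) = (k choose 2) + k`.
-/

/-- The Gaussian binomial coefficient `(n choose k)_q`, defined by the
`q`-Pascal recursion. -/
def gaussBinom {R : Type*} [CommRing R] (q : R) : ℕ → ℕ → R
  | _, 0 => 1
  | 0, _ + 1 => 0
  | n + 1, k + 1 => gaussBinom q n (k + 1) * q ^ (k + 1) + gaussBinom q n k

open Finset

section
variable {R : Type*} [CommRing R]

theorem one_sub_mul_sum_range_pow {d : ℕ → R} {n : ℕ} (hd : d (n + 1) = 0) (b : R) :
    (1 - b) * ∑ i ∈ range (n + 1), d i * b ^ i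
      = d 0 + ∑ i ∈ range (n + 1), (d (i + 1) - d i) * b ^ (i + 1) := by
  have shift : ∑ i ∈ range (n + 1), d (i + 1) * b ^ (i + 1)
      = ∑ i ∈ range (n + 1), d i * b ^ i - d 0 := by
    have h := sum_range_succ' (fun i => d i * b ^ i) (n + 1)
    rw [sum_range_succ, hd, zero_mul, add_zero, pow_zero, mul_one] at h
    exact eq_sub_of_add_eq h.symm
  have split : ∑ i ∈ range (n + 1), (d (i + 1) - d i) * b ^ (i + 1)
      = ∑ i ∈ range (n + 1), d (i + 1) * b ^ (i + 1)
        - ∑ i ∈ range (n + 1), b * (d i * b ^ i) := by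
    rw [← sum_sub_distrib]
    exact sum_congr rfl fun i _ => by ring
  rw [split, shift, one_sub_mul, mul_sum]
  ring

@[simp]
theorem gaussBinom_zero_right (q : R) (n : ℕ) : gaussBinom q n 0 = 1 := by
  cases n <;> rfl

theorem gaussBinom_succ_succ (q : R) (n k : ℕ) :
    gaussBinom q (n + 1) (k + 1) = gaussBinom q n (k + 1) * q ^ (k + 1) + gaussBinom q n k :=
  rfl

theorem gaussBinom_eq_zero_of_lt (q : R) {n k : ℕ} (h : n < k) : gaussBinom q n k = 0 := by
  induction n generalizing k with
  | zero => obtain ⟨k, rfl⟩ := Nat.exists_eq_succ_of_ne_zero h.ne'; rfl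
  | succ n ih =>
    obtain ⟨k, rfl⟩ := Nat.exists_eq_succ_of_ne_zero (Nat.ne_zero_of_lt h)
    rw [gaussBinom_succ_succ, ih (by omega), ih (by omega), zero_mul, add_zero]

theorem gaussBinom_succ_succ_mul_pow_choose_two (q : R) (n k : ℕ) :
    gaussBinom q (n + 1) (k + 1) * q ^ (k + 1).choose 2 * (-1) ^ (k + 1)
      = gaussBinom q n (k + 1) * q ^ (k + 1).choose 2 * (-1) ^ (k + 1) * q ^ (k + 1)
        - gaussBinom q n k * q ^ k.choose 2 * (-1) ^ k * q ^ k := by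
  rw [gaussBinom_succ_succ, Nat.choose_succ_succ, Nat.choose_one_right, pow_add]
  ring

end

theorem q_binomial_formula {R : Type*} [CommRing R] (q b : R) (n : ℕ) :
    ∏ i ∈ Finset.range n, (1 - q ^ i * b)
      = ∑ i ∈ Finset.range (n + 1),
          gaussBinom q n i * q ^ (i.choose 2) * (-1) ^ i * b ^ i := by
  induction n generalizing b with
  | zero => simp
  | succ n ih =>
    have hprod : ∏ i ∈ range (n + 1), (1 - q ^ i * b)
        = (1 - b) * ∏ i ∈ range n, (1 - q ^ i * (q * b)) := by
      rw [prod_range_succ', pow_zero, one_mul, mul_comm]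
      exact congrArg _ (prod_congr rfl fun i _ => by ring)
    have hscale : ∀ i, gaussBinom q n i * q ^ i.choose 2 * (-1) ^ i * (q * b) ^ i
        = gaussBinom q n i * q ^ i.choose 2 * (-1) ^ i * q ^ i * b ^ i := fun i => by ring
    have htop : gaussBinom q n (n + 1) * q ^ (n + 1).choose 2 * (-1) ^ (n + 1) * q ^ (n + 1)
        = 0 := by
      rw [gaussBinom_eq_zero_of_lt q n.lt_succ_self, zero_mul, zero_mul, zero_mul]
    rw [hprod, ih, sum_range_succ' _ (n + 1)]
    simp only [hscale]
    rw [one_sub_mul_sum_range_pow htop]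
    simp [gaussBinom_succ_succ_mul_pow_choose_two, add_comm]
end

section
/- The p-adic fermionic integral of f_n(x) = f(x+n) satisfies I_{-1}(f_n) + (-1)^{n-1} I_{-1}(f) = 2 ∑_{l=0}^{n-1} (-1)^{n-l-1} f(l), for every continuous function f : ℤ_p → ℂ_p and n ≥ 1, where I_{-1}(f) = lim_{N→∞} ∑_{x=0}^{p^N - 1} f(x)(-1)^x. -/
/-!
Over an odd number `M` of terms, the alternating sums `A k = ∑_{x<M} g (x + k) (-1)^x` satisfy
`A (k + 1) + A k = g (M + k) + g k` by telescoping, so `A n - (-1)^n A 0` is an alternating sum of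
the boundary terms `g (M + l) + g l`, `l < n`. For `M = p^N` we have `p^N → 0` in `ℤ_[p]`, so by
continuity `f (p^N + l) → f l`, and each boundary term tends to `2 f l`.
-/

open Filter Topology Finset

section AlternatingSum

variable {R : Type*} [CommRing R]

theorem alternating_sum_shift_succ_add_of_odd (g : ℕ → R) {M : ℕ} (hM : Odd M) (n : ℕ) :
    ∑ x ∈ range M, g (x + (n + 1)) * (-1) ^ x + ∑ x ∈ range M, g (x + n) * (-1) ^ x
      = g (M + n) + g n := by
  calc _ = ∑ x ∈ range M, (-(-1) ^ (x + 1) * g (x + 1 + n) - -(-1) ^ x * g (x + n)) := by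
        rw [← sum_add_distrib]
        refine sum_congr rfl fun x _ => ?_
        rw [show x + (n + 1) = x + 1 + n by omega]
        ring
    _ = -(-1) ^ M * g (M + n) - -(-1) ^ 0 * g (0 + n) :=
        sum_range_sub (fun x => -(-1) ^ x * g (x + n)) M
    _ = g (M + n) + g n := by simp [hM.neg_one_pow]

theorem alternating_sum_shift_sub_of_odd (g : ℕ → R) {M : ℕ} (hM : Odd M) (n : ℕ) :
    ∑ x ∈ range M, g (x + n) * (-1) ^ x - (-1) ^ n * ∑ x ∈ range M, g x * (-1) ^ x
      = ∑ l ∈ range n, (-1) ^ (n - l - 1) * (g (M + l) + g l) := by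
  induction n with
  | zero => simp
  | succ n ih =>
    have hsign : ∀ l ∈ range n, (-1 : R) ^ (n + 1 - l - 1) * (g (M + l) + g l)
        = -((-1) ^ (n - l - 1) * (g (M + l) + g l)) := by
      intro l hl
      rw [show n + 1 - l - 1 = n - l - 1 + 1 by grind, pow_succ]
      ring
    rw [sum_range_succ, sum_congr rfl hsign, sum_neg_distrib, ← ih,
      show n + 1 - n - 1 = 0 by omega]
    linear_combination alternating_sum_shift_succ_add_of_odd g hM n

end AlternatingSum

theorem PadicInt.tendsto_natCast_pow_add {p : ℕ} [Fact p.Prime] {X : Type*} [TopologicalSpace X]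
    {f : ℤ_[p] → X} (hf : Continuous f) (z : ℤ_[p]) :
    Tendsto (fun N : ℕ => f ((p : ℤ_[p]) ^ N + z)) atTop (𝓝 (f z)) := by
  have hp : ‖(p : ℤ_[p])‖ < 1 := by
    rw [PadicInt.norm_p]
    exact inv_lt_one_of_one_lt₀ (mod_cast (Fact.out : p.Prime).one_lt)
  have hpow := (tendsto_pow_atTop_nhds_zero_of_norm_lt_one hp).add_const z
  rw [zero_add] at hpow
  exact (hf.tendsto z).comp hpow

theorem fermionic_integral_shift (p : ℕ) [Fact p.Prime] (hodd : Odd p)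
    (f : ℤ_[p] → ℚ_[p]) (hf : Continuous f) (n : ℕ) (hn : 1 ≤ n)
    (I I' : ℚ_[p])
    (hI : Tendsto (fun N : ℕ => ∑ x ∈ Finset.range (p ^ N), f (x : ℤ_[p]) * (-1) ^ x)
      atTop (𝓝 I))
    (hI' : Tendsto
      (fun N : ℕ => ∑ x ∈ Finset.range (p ^ N), f ((x : ℤ_[p]) + n) * (-1) ^ x)
      atTop (𝓝 I')) :
    I' + (-1 : ℚ_[p]) ^ (n - 1) * I
      = 2 * ∑ l ∈ Finset.range n, (-1 : ℚ_[p]) ^ (n - l - 1) * f (l : ℤ_[p]) := by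
  have hsign : (-1 : ℚ_[p]) ^ (n - 1) = -(-1) ^ n := by
    rw [← pow_sub_one_mul (by omega : n ≠ 0)]
    ring
  have hpartial : ∀ N : ℕ,
      ∑ x ∈ range (p ^ N), f ((x : ℤ_[p]) + n) * (-1) ^ x
        - (-1) ^ n * ∑ x ∈ range (p ^ N), f (x : ℤ_[p]) * (-1) ^ x
      = ∑ l ∈ range n, (-1) ^ (n - l - 1) * (f ((p : ℤ_[p]) ^ N + l) + f l) := by
    intro N
    simpa using alternating_sum_shift_sub_of_odd (fun k : ℕ => f k) (hodd.pow (n := N)) n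
  have hboundary : Tendsto (fun N : ℕ => ∑ l ∈ range n,
      (-1 : ℚ_[p]) ^ (n - l - 1) * (f ((p : ℤ_[p]) ^ N + l) + f l)) atTop
      (𝓝 (∑ l ∈ range n, (-1) ^ (n - l - 1) * (f l + f l))) :=
    tendsto_finsetSum _ fun l _ =>
      ((PadicInt.tendsto_natCast_pow_add hf l).add_const _).const_mul _
  have hlim := tendsto_nhds_unique (hI'.sub (hI.const_mul _))
    (hboundary.congr fun N => (hpartial N).symm)
  rw [hsign, neg_mul, ← sub_eq_add_neg, hlim, mul_sum]
  exact sum_congr rfl fun l _ => by ring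
end

section
/- Existence of the fermionic p-adic integral: for an odd prime p and any continuous function f : ℤ_p → ℚ_p, the limit lim_{N→∞} ∑_{x=0}^{p^N-1} f(x)(-1)^x exists in ℚ_p. -/
/-!
Write `S N` for the `N`-th partial sum. For `N ≤ M`, split `x < p ^ M` as
`x = p ^ N * k + y` with `y < p ^ N`, `k < p ^ (M - N)`. As `p` is odd,
`(-1) ^ x = (-1) ^ (k + y)`, and an alternating sum of an odd number of equal terms is that
term, so `S M - S N` is the sum of the `(f (p ^ N * k + y) - f y) * (-1) ^ (k + y)`.
Since `|p ^ N * k|_p ≤ p⁻¹ ^ N` and `f` is uniformly continuous on the compact `ℤ_[p]`, these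
terms are uniformly small for large `N`, hence so is their sum by the ultrametric inequality:
`S` is Cauchy in the complete `ℚ_[p]`.
-/

open Filter Topology Finset

theorem Finset.sum_range_mul_eq_sum_sum {M : Type*} [AddCommMonoid M] (a b : ℕ) (g : ℕ → M) :
    ∑ x ∈ range (a * b), g x = ∑ k ∈ range b, ∑ y ∈ range a, g (a * k + y) := by
  induction b with
  | zero => simp
  | succ b ih => rw [Nat.mul_succ, sum_range_add, ih, sum_range_succ]

theorem sum_range_mul_neg_one_pow_sub {R : Type*} [CommRing R] {a m : ℕ} (ha : Odd a)
    (hm : Odd m) (g : ℕ → R) :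
    ∑ x ∈ range (a * m), g x * (-1) ^ x - ∑ y ∈ range a, g y * (-1) ^ y
      = ∑ k ∈ range m, ∑ y ∈ range a, (g (a * k + y) - g y) * (-1) ^ (k + y) := by
  have hsign (k y : ℕ) : (-1 : R) ^ (a * k + y) = (-1) ^ (k + y) := by
    rw [pow_add, pow_mul, ha.neg_one_pow, pow_add]
  have hconst : ∑ y ∈ range a, g y * (-1) ^ y
      = ∑ k ∈ range m, ∑ y ∈ range a, g y * (-1) ^ (k + y) := by
    simp_rw [pow_add, mul_left_comm _ ((-1 : R) ^ _), ← mul_sum, ← sum_mul, neg_one_geom_sum,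
      if_neg (Nat.not_even_iff_odd.2 hm), one_mul]
  rw [sum_range_mul_eq_sum_sum, hconst, ← sum_sub_distrib]
  refine sum_congr rfl fun k _ => ?_
  rw [← sum_sub_distrib]
  exact sum_congr rfl fun y _ => by rw [hsign, sub_mul]

theorem exists_norm_sum_range_mul_neg_one_pow_sub_le {K : Type*} [SeminormedCommRing K]
    [IsUltrametricDist K] {a m : ℕ} (ha : Odd a) (hm : Odd m) (g : ℕ → K) :
    ∃ k < m, ∃ y < a,
      ‖∑ x ∈ range (a * m), g x * (-1) ^ x - ∑ y ∈ range a, g y * (-1) ^ y‖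
        ≤ ‖g (a * k + y) - g y‖ := by
  rw [sum_range_mul_neg_one_pow_sub ha hm]
  set term : ℕ → ℕ → K := fun k y => (g (a * k + y) - g y) * (-1) ^ (k + y)
  obtain ⟨k, hk, hk_le⟩ := IsUltrametricDist.exists_norm_finsetSum_le_of_nonempty
    (nonempty_range_iff.2 hm.pos.ne') fun k => ∑ y ∈ range a, term k y
  obtain ⟨y, hy, hy_le⟩ := IsUltrametricDist.exists_norm_finsetSum_le_of_nonempty
    (nonempty_range_iff.2 ha.pos.ne') (term k)
  refine ⟨k, mem_range.1 hk, y, mem_range.1 hy, hk_le.trans (hy_le.trans ?_)⟩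
  rcases neg_one_pow_eq_or K (k + y) with hsign | hsign <;> simp [term, hsign, norm_sub_rev]

theorem PadicInt.dist_natCast_pow_mul_add_le (p : ℕ) [Fact p.Prime] (y N k : ℕ) :
    dist ((p ^ N * k + y : ℕ) : ℤ_[p]) y ≤ (p : ℝ)⁻¹ ^ N := by
  rw [dist_eq_norm]
  push_cast
  rw [add_sub_cancel_right, norm_mul, norm_pow, norm_p, inv_pow]
  exact mul_le_of_le_one_right (by positivity) (norm_le_one _)

theorem fermionic_integral_exists (p : ℕ) [Fact p.Prime] (hodd : Odd p)
    (f : ℤ_[p] → ℚ_[p]) (hf : Continuous f) :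
    ∃ L : ℚ_[p],
      Tendsto (fun N : ℕ => ∑ x ∈ Finset.range (p ^ N), f (x : ℤ_[p]) * (-1) ^ x)
        atTop (𝓝 L) := by
  refine cauchySeq_tendsto_of_complete (Metric.cauchySeq_iff'.2 fun ε hε => ?_)
  obtain ⟨δ, hδ, hfδ⟩ :=
    Metric.uniformContinuous_iff.1 (CompactSpace.uniformContinuous_of_continuous hf) ε hε
  have hp_inv : (p : ℝ)⁻¹ < 1 :=
    inv_lt_one_of_one_lt₀ (Nat.one_lt_cast.2 (Fact.out : p.Prime).one_lt)
  obtain ⟨N, hN⟩ := exists_pow_lt_of_lt_one hδ hp_inv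
  refine ⟨N, fun n hn => ?_⟩
  obtain ⟨k, -, y, -, hle⟩ := exists_norm_sum_range_mul_neg_one_pow_sub_le (hodd.pow (n := N))
    (hodd.pow (n := n - N)) fun x : ℕ => f x
  rw [dist_eq_norm, ← Nat.add_sub_cancel' hn, pow_add]
  exact hle.trans_lt (hfδ ((PadicInt.dist_natCast_pow_mul_add_le p y N k).trans_lt hN))
end

section
/- Main symmetry identity for q-Euler polynomials (Theorem 3): for n ≥ 0, odd w₁, w₂ ∈ ℕ, r ≥ 1, h ∈ ℤ, 0 < q < 1, and real x: [w₁]_q^n ∑_{j_1,…,j_r=0}^{w₁-1} (-1)^{∑ j_l} q^{w₂ ∑_{l=1}^r (h-l) j_l} E_{n,q^{w₁}}^{(h,r)}(w₂ x + (w₂/w₁)(j_1+⋯+j_r)) = [w₂]_q^n ∑_{j_1,…,j_r=0}^{w₂-1} (-1)^{∑ j_l} q^{w₁ ∑_{l=1}^r (h-l) j_l} E_{n,q^{w₂}}^{(h,r)}(w₁ x + (w₁/w₂)(j_1+⋯+j_r)). -/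
/-- The `q`-number `[z]_q = (1 - q^z)/(1 - q)` for real `z`. -/
noncomputable def qNum (q z : ℝ) : ℝ := (1 - q ^ z) / (1 - q)

/-- The `q`-Euler polynomial of order `r`:
`E_{n,q}^{(h,r)}(y) = 2^r ∑_{m_1,…,m_r ≥ 0} q^{∑ (h-l) m_l} (-1)^{∑ m_l} [y + ∑ m_l]_q^n`. -/
noncomputable def qEuler (q : ℝ) (h : ℤ) (r n : ℕ) (y : ℝ) : ℝ :=
  2 ^ r * ∑' m : Fin r → ℕ,
    q ^ (∑ l : Fin r, ((h : ℝ) - (l.1 + 1)) * (m l : ℝ)) *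
      (-1 : ℝ) ^ (∑ l : Fin r, m l) * qNum q (y + (∑ l : Fin r, m l : ℕ)) ^ n

/-! Write each summation index of `E^{(h,r)}_{n,q^{w₁}}` as `m = b w₂ + a` with `a` a residue vector
mod `w₂`. Together with `[w₁]_q [z]_{q^{w₁}} = [w₁ z]_q`, this turns the left-hand side into
`2^r ∑_{j,a,b} T(w₂ j + w₁ a + w₁ w₂ b)`, where `T` is the summand of `E^{(h,r)}_{n,q}(w₁ w₂ x)`;
oddness of `w₁` and `w₂` makes the signs match. That triple sum is symmetric under
`(w₁, j) ↔ (w₂, a)`. -/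

open Finset

lemma qNum_mul_qNum_pow_base {q : ℝ} (hq : 0 ≤ q) {w : ℕ} (hw : q ^ w ≠ 1) (z : ℝ) :
    qNum q w * qNum (q ^ w) z = qNum q (w * z) := by
  have hw' : 1 - q ^ w ≠ 0 := sub_ne_zero.2 hw.symm
  rw [qNum, qNum, qNum, Real.rpow_natCast, ← Real.rpow_natCast q w, ← Real.rpow_mul hq,
    Real.rpow_natCast]
  field_simp

lemma abs_qNum_le {q : ℝ} (hq0 : 0 < q) (hq1 : q < 1) {y z : ℝ} (hyz : y ≤ z) :
    |qNum q z| ≤ (1 + q ^ y) / (1 - q) := by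
  have hz : q ^ z ≤ q ^ y := Real.rpow_le_rpow_of_exponent_ge hq0 hq1.le hyz
  have hz0 : 0 < q ^ z := Real.rpow_pos_of_pos hq0 z
  rw [qNum, abs_div, abs_of_pos (sub_pos.2 hq1)]
  gcongr
  exact abs_le.2 ⟨by linarith, by linarith⟩

lemma summable_prod_pi_of_nonneg {β : Type*} {f : β → ℝ} (hf0 : 0 ≤ f) (hf : Summable f)
    (r : ℕ) : Summable fun m : Fin r → β => ∏ l, f (m l) := by
  induction r with
  | zero => exact .of_finite
  | succ r ih =>
    have hprod : Summable fun p : β × (Fin r → β) => f p.1 * ∏ l, f (p.2 l) :=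
      Summable.mul_of_nonneg (g := fun m : Fin r → β => ∏ l, f (m l)) hf ih hf0
        (fun m => prod_nonneg fun l _ => hf0 (m l))
    refine (Fin.consEquiv fun _ => β).summable_iff.1 (hprod.congr fun p => ?_)
    simp [Fin.consEquiv, Fin.prod_univ_succ]

noncomputable def qEulerTerm (q : ℝ) (h : ℤ) (r n : ℕ) (y : ℝ) (m : Fin r → ℕ) : ℝ :=
  q ^ (∑ l : Fin r, ((h : ℝ) - (l.1 + 1)) * (m l : ℝ)) *
    (-1 : ℝ) ^ (∑ l : Fin r, m l) * qNum q (y + (∑ l : Fin r, m l : ℕ)) ^ n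

lemma qEuler_eq_tsum (q : ℝ) (h : ℤ) (r n : ℕ) (y : ℝ) :
    qEuler q h r n y = 2 ^ r * ∑' m, qEulerTerm q h r n y m := rfl

lemma rpow_weighted_sum_le_prod_pow {q : ℝ} (hq0 : 0 < q) (hq1 : q < 1) {r : ℕ} {h : ℤ} (hh : (r : ℤ) < h) (m : Fin r → ℕ) :
    q ^ (∑ l : Fin r, ((h : ℝ) - (l.1 + 1)) * (m l : ℝ)) ≤ ∏ l, q ^ m l := by
  rw [Real.rpow_sum_of_pos hq0]
  refine prod_le_prod (fun l _ => (Real.rpow_pos_of_pos hq0 _).le) fun l _ => ?_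
  rw [← Real.rpow_natCast]
  refine Real.rpow_le_rpow_of_exponent_ge hq0 hq1.le (le_mul_of_one_le_left (by positivity) ?_)
  have hl : (l.1 : ℝ) + 1 ≤ r := by exact_mod_cast l.isLt
  have hrh : (r : ℝ) + 1 ≤ h := by exact_mod_cast hh
  linarith

lemma summable_qEulerTerm {q : ℝ} (hq0 : 0 < q) (hq1 : q < 1) {r : ℕ} {h : ℤ} (hh : (r : ℤ) < h) (n : ℕ) (y : ℝ) :
    Summable (qEulerTerm q h r n y) := by
  refine .of_norm_bounded ((summable_prod_pi_of_nonneg (fun k => pow_nonneg hq0.le k)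
    (summable_geometric_of_lt_one hq0.le hq1) r).mul_left (((1 + q ^ y) / (1 - q)) ^ n))
    fun m => ?_
  have hqNum : |qNum q (y + (∑ l, m l : ℕ))| ^ n ≤ ((1 + q ^ y) / (1 - q)) ^ n :=
    pow_le_pow_left₀ (abs_nonneg _) (abs_qNum_le hq0 hq1 (by simp [sum_nonneg])) n
  rw [qEulerTerm, norm_mul, norm_mul, norm_pow, norm_neg, norm_one, one_pow, mul_one, norm_pow,
    Real.norm_eq_abs, Real.norm_eq_abs, abs_of_pos (Real.rpow_pos_of_pos hq0 _), mul_comm]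
  exact mul_le_mul hqNum (rpow_weighted_sum_le_prod_pow hq0 hq1 hh m) (by positivity)
    (by positivity)

lemma tsum_pi_eq_sum_tsum_divMod {α : Type*} [AddCommGroup α] [UniformSpace α]
    [IsUniformAddGroup α] [CompleteSpace α] [T2Space α] {r w : ℕ} [NeZero w]
    {F : (Fin r → ℕ) → α} (hF : Summable F) :
    ∑' m, F m = ∑ a : Fin r → Fin w, ∑' b : Fin r → ℕ, F (fun l => b l * w + a l) := by
  let e : (Fin r → Fin w) × (Fin r → ℕ) ≃ (Fin r → ℕ) :=
    (Equiv.prodComm _ _).trans <| (Equiv.arrowProdEquivProdArrow _ _ _).symm.trans <|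
      Equiv.piCongrRight fun _ => (Nat.divModEquiv w).symm
  rw [← e.tsum_eq, Summable.tsum_prod (f := fun p => F (e p)) (e.summable_iff.2 hF), tsum_fintype]
  rfl

lemma qNum_pow_mul_qEulerTerm_pow_base {q : ℝ} (hq0 : 0 < q) {w₁ w₂ : ℕ} (hqw : q ^ w₁ ≠ 1)
    (hw₁ : Odd w₁) (hw₂ : Odd w₂) (h : ℤ) {r : ℕ} (n : ℕ) (x : ℝ) (j m : Fin r → ℕ) :
    qNum q w₁ ^ n * ((-1 : ℝ) ^ (∑ l, j l) *
        q ^ ((w₂ : ℝ) * ∑ l : Fin r, ((h : ℝ) - (l.1 + 1)) * (j l : ℝ)) *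
        qEulerTerm (q ^ w₁) h r n (w₂ * x + (w₂ / w₁) * (∑ l, j l : ℕ)) m)
      = qEulerTerm q h r n (w₁ * w₂ * x) (fun l => w₂ * j l + w₁ * m l) := by
  have hsign : (-1 : ℝ) ^ (∑ l, (w₂ * j l + w₁ * m l)) =
      (-1) ^ (∑ l, j l) * (-1) ^ (∑ l, m l) := by
    rw [sum_add_distrib, ← mul_sum, ← mul_sum, pow_add, pow_mul, pow_mul, hw₂.neg_one_pow,
      hw₁.neg_one_pow]
  have hpow : q ^ (∑ l : Fin r, ((h : ℝ) - (l.1 + 1)) * ((w₂ * j l + w₁ * m l : ℕ) : ℝ)) =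
      q ^ ((w₂ : ℝ) * ∑ l : Fin r, ((h : ℝ) - (l.1 + 1)) * (j l : ℝ)) *
        (q ^ w₁) ^ (∑ l : Fin r, ((h : ℝ) - (l.1 + 1)) * (m l : ℝ)) := by
    rw [← Real.rpow_natCast q w₁, ← Real.rpow_mul hq0.le, ← Real.rpow_add hq0, mul_sum,
      mul_sum, ← sum_add_distrib]
    refine congrArg _ (sum_congr rfl fun l _ => ?_)
    push_cast
    ring
  have harg : (w₁ : ℝ) * (w₂ * x + w₂ / w₁ * (∑ l, j l : ℕ) + (∑ l, m l : ℕ)) =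
      w₁ * w₂ * x + (∑ l, (w₂ * j l + w₁ * m l) : ℕ) := by
    have : (w₁ : ℝ) ≠ 0 := by exact_mod_cast hw₁.pos.ne'
    push_cast
    field_simp
    rw [sum_add_distrib, ← mul_sum, ← mul_sum]
    ring
  rw [qEulerTerm, qEulerTerm, hsign, hpow, ← harg, ← qNum_mul_qNum_pow_base hq0.le hqw]
  ring

lemma qNum_pow_mul_sum_qEuler_eq {q : ℝ} (hq0 : 0 < q) (hq1 : q < 1) {r : ℕ} {h : ℤ}
    (hh : (r : ℤ) < h) (n : ℕ) (x : ℝ) {w₁ w₂ : ℕ} (hw₁ : Odd w₁) (hw₂ : Odd w₂) :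
    qNum q w₁ ^ n * ∑ j : Fin r → Fin w₁,
        (-1 : ℝ) ^ (∑ l : Fin r, (j l : ℕ)) *
          q ^ ((w₂ : ℝ) * ∑ l : Fin r, ((h : ℝ) - (l.1 + 1)) * (j l : ℕ)) *
          qEuler (q ^ w₁) h r n ((w₂ : ℝ) * x + ((w₂ : ℝ) / w₁) * (∑ l : Fin r, (j l : ℕ) : ℕ))
      = 2 ^ r * ∑ j : Fin r → Fin w₁, ∑ a : Fin r → Fin w₂, ∑' b : Fin r → ℕ,
          qEulerTerm q h r n (w₁ * w₂ * x) (fun l => w₂ * j l + w₁ * (b l * w₂ + a l)) := by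
  have : NeZero w₂ := ⟨hw₂.pos.ne'⟩
  have hqw : q ^ w₁ ≠ 1 := (pow_lt_one₀ hq0.le hq1 hw₁.pos.ne').ne
  rw [mul_sum, mul_sum]
  refine sum_congr rfl fun j _ => ?_
  have hF : Summable fun m : Fin r → ℕ =>
      qEulerTerm q h r n (w₁ * w₂ * x) (fun l => w₂ * j l + w₁ * m l) :=
    (summable_qEulerTerm hq0 hq1 hh n _).comp_injective fun m m' hmm' => funext fun l =>
      Nat.eq_of_mul_eq_mul_left hw₁.pos (Nat.add_left_cancel (congrFun hmm' l))
  rw [← tsum_pi_eq_sum_tsum_divMod hF]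
  simp_rw [← qNum_pow_mul_qEulerTerm_pow_base hq0 hqw hw₁ hw₂, tsum_mul_left, qEuler_eq_tsum]
  ring

theorem qEuler_symmetry_general (q x : ℝ) (hq0 : 0 < q) (hq1 : q < 1)
    (r : ℕ) (h : ℤ) (hh : (r : ℤ) < h) (n : ℕ)
    (w₁ w₂ : ℕ) (hw₁ : Odd w₁) (hw₂ : Odd w₂) :
    qNum q w₁ ^ n * ∑ j : Fin r → Fin w₁,
        (-1 : ℝ) ^ (∑ l : Fin r, (j l : ℕ)) *
          q ^ ((w₂ : ℝ) * ∑ l : Fin r, ((h : ℝ) - (l.1 + 1)) * (j l : ℕ)) *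
          qEuler (q ^ w₁) h r n ((w₂ : ℝ) * x + ((w₂ : ℝ) / w₁) * (∑ l : Fin r, (j l : ℕ) : ℕ))
      = qNum q w₂ ^ n * ∑ j : Fin r → Fin w₂,
          (-1 : ℝ) ^ (∑ l : Fin r, (j l : ℕ)) *
            q ^ ((w₁ : ℝ) * ∑ l : Fin r, ((h : ℝ) - (l.1 + 1)) * (j l : ℕ)) *
            qEuler (q ^ w₂) h r n ((w₁ : ℝ) * x + ((w₁ : ℝ) / w₂) * (∑ l : Fin r, (j l : ℕ) : ℕ)) := by
  rw [qNum_pow_mul_sum_qEuler_eq hq0 hq1 hh n x hw₁ hw₂,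
    qNum_pow_mul_sum_qEuler_eq hq0 hq1 hh n x hw₂ hw₁, sum_comm, mul_comm (w₂ : ℝ)]
  refine congrArg _ (sum_congr rfl fun a _ => sum_congr rfl fun j _ => tsum_congr fun b => ?_)
  congr 1
  funext l
  ring

theorem qEuler_symmetry (q x : ℝ) (hq0 : 0 < q) (hq1 : q < 1)
    (r : ℕ) (hr : 1 ≤ r) (h : ℤ) (hh : (r : ℤ) < h) (n : ℕ)
    (w₁ w₂ : ℕ) (hw₁ : Odd w₁) (hw₂ : Odd w₂) (hw₁' : 0 < w₁) (hw₂' : 0 < w₂) :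
    qNum q w₁ ^ n * ∑ j : Fin r → Fin w₁,
        (-1 : ℝ) ^ (∑ l : Fin r, (j l : ℕ)) *
          q ^ ((w₂ : ℝ) * ∑ l : Fin r, ((h : ℝ) - (l.1 + 1)) * (j l : ℕ)) *
          qEuler (q ^ w₁) h r n ((w₂ : ℝ) * x + ((w₂ : ℝ) / w₁) * (∑ l : Fin r, (j l : ℕ) : ℕ))
      = qNum q w₂ ^ n * ∑ j : Fin r → Fin w₂,
          (-1 : ℝ) ^ (∑ l : Fin r, (j l : ℕ)) *
            q ^ ((w₁ : ℝ) * ∑ l : Fin r, ((h : ℝ) - (l.1 + 1)) * (j l : ℕ)) *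
            qEuler (q ^ w₂) h r n ((w₁ : ℝ) * x + ((w₁ : ℝ) / w₂) * (∑ l : Fin r, (j l : ℕ) : ℕ)) :=
  qEuler_symmetry_general q x hq0 hq1 r h hh n w₁ w₂ hw₁ hw₂
end

section
/- The binomial expansion of shifted q-Euler polynomials: for n ≥ 0, w₁, w₂ ∈ ℕ positive, j_1,…,j_r ∈ ℕ, 0 < q < 1, real x, E_{n,q^{w₁}}^{(h,r)}(w₂x + (w₂/w₁)(j₁+⋯+j_r)) = ∑_{i=0}^{n} (n choose i) ([w₂]_q/[w₁]_q)^i [j₁+⋯+j_r]_{q^{w₂}}^i q^{w₂(n−i)(j₁+⋯+j_r)} E_{n−i,q^{w₁}}^{(h,r)}(w₂x). -/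
/-!
Splitting `[a + y]_Q = [a]_Q + Q^a [y]_Q` and expanding the `n`-th power binomially expands each
summand of the series defining `E_{n,Q}^{(h,r)}(y + a)`; since `h > r` the weights decay
geometrically in every index `m_l` while `[y + M]_Q` stays bounded, so the series may be summed
term by term, giving an addition formula in the argument. The theorem is its instance with
`Q = q^{w₁}` and `a = (w₂/w₁) J`, where the scaling rule `[w u]_q = [w]_q [u]_{q^w}`, applied with
`w = w₁` and with `w = w₂`, evaluates `[a]_Q = ([w₂]_q / [w₁]_q) [J]_{q^{w₂}}`.
-/

open Finset

theorem qNum_add {Q : ℝ} (hQ : 0 < Q) (u v : ℝ) :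
    qNum Q (u + v) = qNum Q u + Q ^ u * qNum Q v := by
  unfold qNum
  rw [Real.rpow_add hQ]
  ring

theorem qNum_mul {q : ℝ} (hq : 0 ≤ q) (w u : ℝ) :
    qNum q (w * u) = qNum q w * qNum (q ^ w) u := by
  unfold qNum
  rw [Real.rpow_mul hq]
  by_cases hqw : q ^ w = 1
  · -- both sides vanish, the right one through the junk value `x / 0 = 0`
    simp [hqw]
  · field_simp [sub_ne_zero.mpr (Ne.symm hqw)]

theorem qNum_ne_zero {q w : ℝ} (hq0 : 0 < q) (hq1 : q ≠ 1) (hw : w ≠ 0) : qNum q w ≠ 0 := by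
  have hqw : q ^ w ≠ 1 := by
    simpa [Real.rpow_zero] using (Real.rpow_right_inj hq0 hq1 (z := 0)).not.mpr hw
  exact div_ne_zero (sub_ne_zero.mpr (Ne.symm hqw)) (sub_ne_zero.mpr (Ne.symm hq1))

theorem qNum_rpow_div_mul {q w₁ : ℝ} (hq0 : 0 < q) (hq1 : q ≠ 1) (hw₁ : w₁ ≠ 0) (w₂ u : ℝ) :
    qNum (q ^ w₁) (w₂ / w₁ * u) = qNum q w₂ / qNum q w₁ * qNum (q ^ w₂) u := by
  have hboth := qNum_mul hq0.le w₁ (w₂ / w₁ * u)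
  rw [show w₁ * (w₂ / w₁ * u) = w₂ * u by field_simp, qNum_mul hq0.le] at hboth
  calc qNum (q ^ w₁) (w₂ / w₁ * u)
      = qNum q w₁ * qNum (q ^ w₁) (w₂ / w₁ * u) / qNum q w₁ :=
        (mul_div_cancel_left₀ _ (qNum_ne_zero hq0 hq1 hw₁)).symm
    _ = qNum q w₂ / qNum q w₁ * qNum (q ^ w₂) u := by rw [← hboth]; ring

theorem qNum_add_pow {Q : ℝ} (hQ : 0 < Q) (a y : ℝ) (n : ℕ) :
    qNum Q (a + y) ^ n = ∑ i ∈ range (n + 1),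
      (n.choose i : ℝ) * qNum Q a ^ i * (Q ^ a) ^ (n - i) * qNum Q y ^ (n - i) := by
  rw [qNum_add hQ, add_pow]
  refine sum_congr rfl fun i _ => ?_
  ring

theorem abs_qNum_add_natCast_le {Q : ℝ} (hQ0 : 0 < Q) (hQ1 : Q < 1) (y : ℝ) (M : ℕ) :
    |qNum Q (y + M)| ≤ (1 + Q ^ y) / (1 - Q) := by
  have hdecay : Q ^ (y + M) ≤ Q ^ y := by
    rw [Real.rpow_add hQ0, Real.rpow_natCast]
    exact mul_le_of_le_one_right (Real.rpow_nonneg hQ0.le y) (pow_le_one₀ hQ0.le hQ1.le)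
  have hpos : 0 < Q ^ (y + M) := Real.rpow_pos_of_pos hQ0 _
  unfold qNum
  rw [abs_div, abs_of_pos (sub_pos.mpr hQ1)]
  gcongr
  rw [abs_le]
  constructor <;> linarith

theorem summable_prod_pow_of_lt_one {r : ℕ} (c : Fin r → ℝ) (hc0 : ∀ l, 0 ≤ c l)
    (hc1 : ∀ l, c l < 1) : Summable fun m : Fin r → ℕ => ∏ l, c l ^ m l := by
  induction r with
  | zero => exact .of_finite
  | succ r ih =>
    rw [← (Fin.consEquiv fun _ : Fin (r + 1) => ℕ).summable_iff]
    have hsplit : ((fun m : Fin (r + 1) → ℕ => ∏ l, c l ^ m l) ∘ Fin.consEquiv fun _ => ℕ)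
        = fun p : ℕ × (Fin r → ℕ) => c 0 ^ p.1 * ∏ l : Fin r, c l.succ ^ p.2 l := by
      funext p
      simp only [Function.comp_apply, Fin.consEquiv_apply, Fin.prod_univ_succ,
        Fin.cons_zero, Fin.cons_succ]
    rw [hsplit]
    apply Summable.mul_of_nonneg (summable_geometric_of_lt_one (hc0 0) (hc1 0))
      (ih (fun l => c l.succ) (fun l => hc0 _) (fun l => hc1 _))
    · exact fun k => pow_nonneg (hc0 0) k
    · exact fun m => prod_nonneg fun l _ => pow_nonneg (hc0 _) _

noncomputable def qEulerWeight (Q : ℝ) (h : ℤ) {r : ℕ} (m : Fin r → ℕ) : ℝ :=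
  Q ^ (∑ l : Fin r, ((h : ℝ) - (l.1 + 1)) * (m l : ℝ)) * (-1 : ℝ) ^ (∑ l : Fin r, m l)

theorem qEuler_eq_tsum_qEulerWeight (Q : ℝ) (h : ℤ) (r n : ℕ) (y : ℝ) :
    qEuler Q h r n y =
      2 ^ r * ∑' m : Fin r → ℕ, qEulerWeight Q h m * qNum Q (y + (∑ l : Fin r, m l : ℕ)) ^ n :=
  rfl

theorem abs_qEulerWeight {Q : ℝ} (hQ : 0 < Q) (h : ℤ) {r : ℕ} (m : Fin r → ℕ) :
    |qEulerWeight Q h m| = ∏ l, (Q ^ ((h : ℝ) - (l.1 + 1))) ^ m l := by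
  rw [qEulerWeight, abs_mul, abs_pow, abs_neg, abs_one, one_pow, mul_one,
    abs_of_pos (Real.rpow_pos_of_pos hQ _), Real.rpow_sum_of_pos hQ]
  refine prod_congr rfl fun l _ => ?_
  rw [Real.rpow_mul hQ.le, Real.rpow_natCast]

theorem summable_qEulerWeight_mul {Q : ℝ} (hQ0 : 0 < Q) (hQ1 : Q < 1) {h : ℤ} {r : ℕ}
    (hh : (r : ℤ) < h) {f : ℕ → ℝ} {B : ℝ} (hf : ∀ M, |f M| ≤ B) :
    Summable fun m : Fin r → ℕ => qEulerWeight Q h m * f (∑ l, m l) := by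
  have hdecay : ∀ l : Fin r, Q ^ ((h : ℝ) - (l.1 + 1)) < 1 := by
    intro l
    refine Real.rpow_lt_one hQ0.le hQ1 ?_
    have hl : (l.1 : ℝ) + 1 ≤ r := by exact_mod_cast l.2
    have hrh : (r : ℝ) < h := by exact_mod_cast hh
    linarith
  refine Summable.of_norm_bounded
    ((summable_prod_pow_of_lt_one _ (fun l => Real.rpow_nonneg hQ0.le _) hdecay).mul_right B)
    fun m => ?_
  rw [Real.norm_eq_abs, abs_mul, abs_qEulerWeight hQ0]
  exact mul_le_mul_of_nonneg_left (hf _) (prod_nonneg fun l _ => by positivity)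

theorem qEuler_add {Q : ℝ} (hQ0 : 0 < Q) (hQ1 : Q < 1) {h : ℤ} {r : ℕ} (hh : (r : ℤ) < h)
    (n : ℕ) (y a : ℝ) :
    qEuler Q h r n (y + a) = ∑ i ∈ range (n + 1),
      (n.choose i : ℝ) * qNum Q a ^ i * (Q ^ a) ^ (n - i) * qEuler Q h r (n - i) y := by
  have hsummable : ∀ k : ℕ, Summable fun m : Fin r → ℕ =>
      qEulerWeight Q h m * qNum Q (y + (∑ l, m l : ℕ)) ^ k := fun k =>
    summable_qEulerWeight_mul hQ0 hQ1 hh (f := fun M => qNum Q (y + M) ^ k) fun M => by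
      rw [abs_pow]
      exact pow_le_pow_left₀ (abs_nonneg _) (abs_qNum_add_natCast_le hQ0 hQ1 y M) k
  have hexpand : ∀ m : Fin r → ℕ,
      qEulerWeight Q h m * qNum Q (y + a + (∑ l, m l : ℕ)) ^ n = ∑ i ∈ range (n + 1),
        (n.choose i : ℝ) * qNum Q a ^ i * (Q ^ a) ^ (n - i) *
          (qEulerWeight Q h m * qNum Q (y + (∑ l, m l : ℕ)) ^ (n - i)) := by
    intro m
    rw [show y + a + (∑ l, m l : ℕ) = a + (y + (∑ l, m l : ℕ)) by ring, qNum_add_pow hQ0,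
      mul_sum]
    exact sum_congr rfl fun i _ => by ring
  simp only [qEuler_eq_tsum_qEulerWeight, hexpand]
  rw [Summable.tsum_finsetSum fun i _ => (hsummable (n - i)).mul_left _, mul_sum]
  refine sum_congr rfl fun i _ => ?_
  rw [tsum_mul_left]
  ring

theorem qEuler_binomial_expansion_general (q x : ℝ) (hq0 : 0 < q) (hq1 : q < 1)
    (r : ℕ) (h : ℤ) (hh : (r : ℤ) < h) (n : ℕ)
    (w₁ w₂ : ℕ) (hw₁ : 0 < w₁) (j : Fin r → ℕ) :
    qEuler (q ^ w₁) h r n ((w₂ : ℝ) * x + ((w₂ : ℝ) / w₁) * (∑ l : Fin r, j l : ℕ))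
      = ∑ i ∈ Finset.range (n + 1),
          (n.choose i : ℝ) * (qNum q w₂ / qNum q w₁) ^ i *
            qNum (q ^ w₂) (∑ l : Fin r, j l : ℕ) ^ i *
            q ^ ((w₂ : ℝ) * (n - i : ℕ) * (∑ l : Fin r, j l : ℕ)) *
            qEuler (q ^ w₁) h r (n - i) ((w₂ : ℝ) * x) := by
  set J : ℝ := ((∑ l : Fin r, j l : ℕ) : ℝ)
  have hw₁' : (w₁ : ℝ) ≠ 0 := by exact_mod_cast hw₁.ne'
  have hscale : qNum (q ^ w₁) (w₂ / w₁ * J) = qNum q w₂ / qNum q w₁ * qNum (q ^ w₂) J := by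
    simpa only [Real.rpow_natCast] using qNum_rpow_div_mul hq0 hq1.ne hw₁' w₂ J
  have hpow : ∀ k : ℕ, ((q ^ w₁) ^ ((w₂ : ℝ) / w₁ * J)) ^ k = q ^ ((w₂ : ℝ) * k * J) := by
    intro k
    rw [← Real.rpow_natCast q w₁, ← Real.rpow_mul hq0.le, ← Real.rpow_natCast,
      ← Real.rpow_mul hq0.le]
    congr 1
    field_simp
  rw [qEuler_add (pow_pos hq0 w₁) (pow_lt_one₀ hq0.le hq1 hw₁.ne') hh]
  refine sum_congr rfl fun i _ => ?_
  rw [hscale, hpow, mul_pow]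
  ring

theorem qEuler_binomial_expansion (q x : ℝ) (hq0 : 0 < q) (hq1 : q < 1)
    (r : ℕ) (hr : 1 ≤ r) (h : ℤ) (hh : (r : ℤ) < h) (n : ℕ)
    (w₁ w₂ : ℕ) (hw₁ : 0 < w₁) (hw₂ : 0 < w₂) (j : Fin r → ℕ) :
    qEuler (q ^ w₁) h r n ((w₂ : ℝ) * x + ((w₂ : ℝ) / w₁) * (∑ l : Fin r, j l : ℕ))
      = ∑ i ∈ Finset.range (n + 1),
          (n.choose i : ℝ) * (qNum q w₂ / qNum q w₁) ^ i *
            qNum (q ^ w₂) (∑ l : Fin r, j l : ℕ) ^ i *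
            q ^ ((w₂ : ℝ) * (n - i : ℕ) * (∑ l : Fin r, j l : ℕ)) *
            qEuler (q ^ w₁) h r (n - i) ((w₂ : ℝ) * x) :=
  qEuler_binomial_expansion_general q x hq0 hq1 r h hh n w₁ w₂ hw₁ j
end
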